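/- Let 1 ≤ s < t and N ≥ 1. For every binary N×t matrix X and every decision rule D : {0,1}^N → {H₀, H₁}, max{ C(t,s)^{-1}·#{S ⊆ [t] : |S| = s, D(x(S)) = H₁}, C(t,s+1)^{-1}·#{S ⊆ [t] : |S| = s+1, D(x(S)) = H₀} } ≥ (1/2)·( 2^{−N/s}·t/(t−s) − s/(t−s) ). -/
import Mathlib


/-- Hypotheses of the test: `H0` : `|S| ≤ s`, `H1` : `|S| ≥ s+1`. -/
inductive Hyp : Type
  | H0 : Hyp
  | H1 : Hyp
deriving DecidableEq

/-- Response vector `x(S)`: componentwise Boolean OR of the columns `x(j)`, `j ∈ S`. -/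
def resp {N t : ℕ} (X : Fin t → Fin N → Bool) (S : Finset (Fin t)) : Fin N → Bool :=
  fun i => decide (∃ j ∈ S, X j i = true)

open Finset

lemma hyp_not_h0 (h : Hyp) : ¬ h = Hyp.H0 ↔ h = Hyp.H1 := by
  cases h <;> simp

/-- `C(m,s)·t^s ≤ C(t,s)·m^s` for `m ≤ t`. -/
lemma choose_mul_pow_le {m t : ℕ} (s : ℕ) (h : m ≤ t) :
    m.choose s * t ^ s ≤ t.choose s * m ^ s := by
  have key : m.descFactorial s * t ^ s ≤ t.descFactorial s * m ^ s := by
    rw [Nat.descFactorial_eq_prod_range, Nat.descFactorial_eq_prod_range]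
    calc (∏ i ∈ range s, (m - i)) * t ^ s
        = ∏ i ∈ range s, ((m - i) * t) := by
          rw [prod_mul_distrib, prod_const, card_range]
      _ ≤ ∏ i ∈ range s, ((t - i) * m) := by
          apply Finset.prod_le_prod (fun i _ => Nat.zero_le _)
          intro i _
          rw [Nat.sub_mul, Nat.sub_mul, Nat.mul_comm t m]
          exact Nat.sub_le_sub_left (Nat.mul_le_mul_left i h) (m * t)
      _ = (∏ i ∈ range s, (t - i)) * m ^ s := by
          rw [prod_mul_distrib, prod_const, card_range]
  rw [Nat.descFactorial_eq_factorial_mul_choose, Nat.descFactorial_eq_factorial_mul_choose,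
    Nat.mul_assoc, Nat.mul_assoc] at key
  exact Nat.le_of_mul_le_mul_left key (Nat.factorial_pos s)

/-- The set of columns covered by the response vector `y`. -/
def covSet {N t : ℕ} (X : Fin t → Fin N → Bool) (y : Fin N → Bool) : Finset (Fin t) :=
  Finset.univ.filter fun j => ∀ i, X j i = true → y i = true

lemma subset_covSet {N t : ℕ} (X : Fin t → Fin N → Bool) (S : Finset (Fin t)) :
    S ⊆ covSet X (resp X S) := by
  intro j hj
  refine Finset.mem_filter.mpr ⟨Finset.mem_univ _, ?_⟩
  intro i hXji
  simp only [resp, decide_eq_true_eq]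
  exact ⟨j, hj, hXji⟩

lemma covSet_card_le {N t : ℕ} (X : Fin t → Fin N → Bool) (y : Fin N → Bool) :
    (covSet X y).card ≤ t := by
  calc (covSet X y).card ≤ Finset.univ.card := Finset.card_filter_le _ _
    _ = t := by simp

lemma resp_insert_eq {N t : ℕ} (X : Fin t → Fin N → Bool) {S : Finset (Fin t)} {j : Fin t}
    (hj : j ∈ covSet X (resp X S)) : resp X (insert j S) = resp X S := by
  have hj' : ∀ i, X j i = true → resp X S i = true := (Finset.mem_filter.mp hj).2
  funext i
  simp only [resp, decide_eq_decide]
  constructor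
  · rintro ⟨k, hk, hXk⟩
    rcases Finset.mem_insert.mp hk with rfl | hk'
    · exact of_decide_eq_true (hj' i hXk)
    · exact ⟨k, hk', hXk⟩
  · rintro ⟨k, hk, hXk⟩
    exact ⟨k, Finset.mem_insert_of_mem hk, hXk⟩

/-- Jensen/power-mean step: if weights `w` sum to `1` and `w i ≤ z i ^ s`, then
`∑ w i z i ≥ (card ι)^(-1/s)`. -/
lemma jensen_aux {ι : Type*} [Fintype ι] [Nonempty ι] (w z : ι → ℝ) (s : ℕ) (hs : 1 ≤ s)
    (hw0 : ∀ i, 0 ≤ w i) (hw1 : ∑ i, w i = 1) (hz0 : ∀ i, 0 ≤ z i)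
    (hwz : ∀ i, w i ≤ z i ^ s) :
    ((Fintype.card ι : ℝ)) ^ (-(1 : ℝ) / (s : ℝ)) ≤ ∑ i, w i * z i := by
  have hsR : (0 : ℝ) < (s : ℝ) := by exact_mod_cast hs
  set p : ℝ := 1 + 1 / (s : ℝ) with hp_def
  have hp : 1 ≤ p := by
    have h0 : 0 ≤ 1 / (s : ℝ) := by positivity
    rw [hp_def]; linarith
  have hK : (0 : ℝ) < (Fintype.card ι : ℝ) := by exact_mod_cast Fintype.card_pos
  set K : ℝ := (Fintype.card ι : ℝ) with hK_def
  -- pointwise: w i ^ p ≤ w i * z i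
  have step1 : ∀ i, w i ^ p ≤ w i * z i := by
    intro i
    have h1 : w i ^ ((1 : ℝ) / (s : ℝ)) ≤ z i := by
      have h2 : w i ^ ((1 : ℝ) / (s : ℝ)) ≤ (z i ^ s) ^ ((1 : ℝ) / (s : ℝ)) :=
        Real.rpow_le_rpow (hw0 i) (hwz i) (by positivity)
      rwa [← Real.rpow_natCast (z i) s, ← Real.rpow_mul (hz0 i), mul_one_div,
        div_self (ne_of_gt hsR), Real.rpow_one] at h2
    have h3 : w i ^ p = w i * w i ^ ((1 : ℝ) / (s : ℝ)) := by
      rw [hp_def, Real.rpow_add' (hw0 i) (by positivity), Real.rpow_one]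
    rw [h3]
    exact mul_le_mul_of_nonneg_left h1 (hw0 i)
  -- Jensen: ∑ w ^ p ≥ K ^ (1 - p)
  have hwsum : ∑ _i : ι, K⁻¹ = 1 := by
    rw [Finset.sum_const, Finset.card_univ, nsmul_eq_mul, ← hK_def,
      mul_inv_cancel₀ (ne_of_gt hK)]
  have hJ := Real.rpow_arith_mean_le_arith_mean_rpow Finset.univ (fun _ => K⁻¹) w
    (fun i _ => by positivity) hwsum (fun i _ => hw0 i) hp
  have hL : (∑ i, K⁻¹ * w i) = K⁻¹ := by
    rw [← Finset.mul_sum, hw1, mul_one]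
  have hR : (∑ i, K⁻¹ * w i ^ p) = K⁻¹ * ∑ i, w i ^ p := by
    rw [Finset.mul_sum]
  rw [hL, hR] at hJ
  have hstep2 : K ^ ((1 : ℝ) - p) ≤ ∑ i, w i ^ p := by
    have h4 : K * K⁻¹ ^ p ≤ K * (K⁻¹ * ∑ i, w i ^ p) :=
      mul_le_mul_of_nonneg_left hJ (le_of_lt hK)
    have h5 : K * (K⁻¹ * ∑ i, w i ^ p) = ∑ i, w i ^ p := by
      field_simp
    have h6 : K * K⁻¹ ^ p = K ^ ((1 : ℝ) - p) := by
      rw [Real.inv_rpow (le_of_lt hK), ← Real.rpow_neg (le_of_lt hK)]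
      nth_rewrite 1 [← Real.rpow_one K]
      rw [← Real.rpow_add hK]
      ring_nf
    rw [h5, h6] at h4
    exact h4
  have hexp : -(1 : ℝ) / (s : ℝ) = (1 : ℝ) - p := by
    rw [hp_def]; ring
  calc K ^ (-(1 : ℝ) / (s : ℝ)) = K ^ ((1 : ℝ) - p) := by rw [hexp]
    _ ≤ ∑ i, w i ^ p := hstep2
    _ ≤ ∑ i, w i * z i := Finset.sum_le_sum fun i _ => step1 i

/-- for any decision rule `D` and testing matrix `X`, the maximal error
probability is at least `(1/2)·(2^{−N/s}·t/(t−s) − s/(t−s))`. -/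
theorem stmt_4 {N t : ℕ} (hN : 1 ≤ N) (s : ℕ) (hs : 1 ≤ s) (hst : s < t)
    (X : Fin t → Fin N → Bool) (D : (Fin N → Bool) → Hyp) :
    (1 / 2 : ℝ) * ((2 : ℝ) ^ (-(N : ℝ) / (s : ℝ)) * (t : ℝ) / ((t : ℝ) - (s : ℝ))
        - (s : ℝ) / ((t : ℝ) - (s : ℝ))) ≤
      max
        (((Finset.univ.filter fun S : Finset (Fin t) =>
            S.card = s ∧ D (resp X S) = Hyp.H1).card : ℝ) / (t.choose s : ℝ))
        (((Finset.univ.filter fun S : Finset (Fin t) =>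
            S.card = s + 1 ∧ D (resp X S) = Hyp.H0).card : ℝ) / (t.choose (s + 1) : ℝ)) := by
  classical
  have hts : s ≤ t := le_of_lt hst
  have hts' : s + 1 ≤ t := hst
  have hsR : (0 : ℝ) < (s : ℝ) := by exact_mod_cast hs
  have htN : 0 < t := lt_of_le_of_lt (Nat.zero_le s) hst
  have htR : (0 : ℝ) < (t : ℝ) := by exact_mod_cast htN
  have hd : (0 : ℝ) < (t : ℝ) - (s : ℝ) := by
    have : (s : ℝ) < (t : ℝ) := by exact_mod_cast hst
    linarith
  have hcN : 0 < t.choose s := Nat.choose_pos hts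
  have hcN' : 0 < t.choose (s + 1) := Nat.choose_pos hts'
  have hc : (0 : ℝ) < (t.choose s : ℝ) := by exact_mod_cast hcN
  have hc' : (0 : ℝ) < (t.choose (s + 1) : ℝ) := by exact_mod_cast hcN'
  set allS : Finset (Finset (Fin t)) := Finset.univ.filter (fun S => S.card = s) with hallS_def
  set As : Finset (Finset (Fin t)) :=
    Finset.univ.filter (fun S : Finset (Fin t) => S.card = s ∧ D (resp X S) = Hyp.H1) with hAs_def
  set Bs : Finset (Finset (Fin t)) :=
    Finset.univ.filter
      (fun S : Finset (Fin t) => S.card = s + 1 ∧ D (resp X S) = Hyp.H0) with hBs_def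
  set Gs : Finset (Finset (Fin t)) :=
    Finset.univ.filter (fun S : Finset (Fin t) => S.card = s ∧ D (resp X S) = Hyp.H0) with hGs_def
  -- cardinality of allS
  have hallcard : allS.card = t.choose s := by
    have h : allS = Finset.powersetCard s Finset.univ := by
      ext S
      simp [hallS_def, Finset.mem_powersetCard_univ]
    rw [h, Finset.card_powersetCard, Finset.card_univ, Fintype.card_fin]
  -- fiber counts
  set nn : (Fin N → Bool) → ℕ := fun y => (allS.filter (fun S => resp X S = y)).card with hnn_def
  set mm : (Fin N → Bool) → ℕ := fun y => (covSet X y).card with hmm_def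
  have hnnsum : ∑ y : Fin N → Bool, nn y = t.choose s := by
    rw [← hallcard]
    exact (Finset.card_eq_sum_card_fiberwise
      (fun S _ => Finset.mem_univ (resp X S))).symm
  have hnn_le : ∀ y, nn y ≤ (mm y).choose s := by
    intro y
    have hsub : allS.filter (fun S => resp X S = y) ⊆ Finset.powersetCard s (covSet X y) := by
      intro S hS
      obtain ⟨hS1, hS2⟩ := Finset.mem_filter.mp hS
      obtain ⟨-, hcard⟩ := Finset.mem_filter.mp hS1
      refine Finset.mem_powersetCard.mpr ⟨?_, hcard⟩
      have := subset_covSet X S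
      rwa [hS2] at this
    calc nn y ≤ (Finset.powersetCard s (covSet X y)).card := Finset.card_le_card hsub
      _ = (mm y).choose s := by rw [Finset.card_powersetCard]
  have hmm_le : ∀ y, mm y ≤ t := fun y => covSet_card_le X y
  -- apply the analytic lemma
  have hcardΩ : Fintype.card (Fin N → Bool) = 2 ^ N := by
    simp [Fintype.card_fun]
  have hjen : ((Fintype.card (Fin N → Bool) : ℝ)) ^ (-(1 : ℝ) / (s : ℝ)) ≤
      ∑ y : Fin N → Bool, ((nn y : ℝ) / (t.choose s : ℝ)) * ((mm y : ℝ) / (t : ℝ)) := by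
    apply jensen_aux _ _ s hs
    · intro y; positivity
    · rw [← Finset.sum_div]
      rw [show (∑ y : Fin N → Bool, (nn y : ℝ)) = ((t.choose s : ℝ)) by
        rw [← hnnsum]; push_cast; ring]
      exact div_self (ne_of_gt hc)
    · intro y; positivity
    · intro y
      rw [div_pow, div_le_div_iff₀ hc (by positivity)]
      have hnat : nn y * t ^ s ≤ t.choose s * (mm y) ^ s :=
        le_trans (Nat.mul_le_mul_right _ (hnn_le y)) (choose_mul_pow_le s (hmm_le y))
      calc (nn y : ℝ) * ((t : ℝ)) ^ s = ((nn y * t ^ s : ℕ) : ℝ) := by push_cast; ring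
        _ ≤ ((t.choose s * (mm y) ^ s : ℕ) : ℝ) := by exact_mod_cast hnat
        _ = ((mm y : ℝ)) ^ s * (t.choose s : ℝ) := by push_cast; ring
  have hconv : ((Fintype.card (Fin N → Bool) : ℝ)) ^ (-(1 : ℝ) / (s : ℝ)) =
      (2 : ℝ) ^ (-(N : ℝ) / (s : ℝ)) := by
    rw [hcardΩ]
    push_cast
    rw [← Real.rpow_natCast (2 : ℝ) N, ← Real.rpow_mul (by norm_num : (0 : ℝ) ≤ 2)]
    congr 1
    ring
  -- ∑ w z in terms of the fiberwise sum
  have hsumwz : ∑ y : Fin N → Bool, ((nn y : ℝ) / (t.choose s : ℝ)) * ((mm y : ℝ) / (t : ℝ)) =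
      (∑ y : Fin N → Bool, (nn y : ℝ) * (mm y : ℝ)) / ((t.choose s : ℝ) * (t : ℝ)) := by
    rw [Finset.sum_div]
    apply Finset.sum_congr rfl
    intro y _
    rw [div_mul_div_comm]
  have hfib_sum : ∑ y : Fin N → Bool, (nn y : ℝ) * (mm y : ℝ) =
      ∑ S ∈ allS, (mm (resp X S) : ℝ) := by
    rw [← Finset.sum_fiberwise_of_maps_to (fun S (_ : S ∈ allS) => Finset.mem_univ (resp X S))
      (fun S => (mm (resp X S) : ℝ))]
    apply Finset.sum_congr rfl
    intro y _
    have hinner : ∀ S ∈ allS.filter (fun S => resp X S = y),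
        (mm (resp X S) : ℝ) = (mm y : ℝ) := by
      intro S hS
      rw [(Finset.mem_filter.mp hS).2]
    rw [Finset.sum_congr rfl hinner, Finset.sum_const, nsmul_eq_mul]
  -- the key analytic bound
  have hL1 : (t.choose s : ℝ) * (t : ℝ) * (2 : ℝ) ^ (-(N : ℝ) / (s : ℝ)) ≤
      ∑ S ∈ allS, (mm (resp X S) : ℝ) := by
    rw [hconv, hsumwz, hfib_sum] at hjen
    have := (le_div_iff₀ (by positivity : (0 : ℝ) < (t.choose s : ℝ) * (t : ℝ))).mp hjen
    linarith
  -- counting: split allS into Gs and As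
  have h0 : allS.filter (fun S => D (resp X S) = Hyp.H0) = Gs := by
    rw [hallS_def, Finset.filter_filter]
  have h1 : allS.filter (fun S => ¬ D (resp X S) = Hyp.H0) = As := by
    rw [hallS_def, Finset.filter_filter]
    ext S
    simp only [Finset.mem_filter, Finset.mem_univ, true_and, hAs_def]
    rw [hyp_not_h0]
  have hGA_card : Gs.card + As.card = t.choose s := by
    rw [← h0, ← h1, Finset.card_filter_add_card_filter_not, hallcard]
  have hsplitsum : ∑ S ∈ allS, mm (resp X S) =
      ∑ S ∈ Gs, mm (resp X S) + ∑ S ∈ As, mm (resp X S) := by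
    rw [← h0, ← h1]
    exact (Finset.sum_filter_add_sum_filter_not allS _ _).symm
  -- bound on the sum over As
  have hAsum : ∑ S ∈ As, mm (resp X S) ≤ t * As.card := by
    calc ∑ S ∈ As, mm (resp X S) ≤ As.card • t :=
          Finset.sum_le_card_nsmul As _ t (fun S _ => hmm_le (resp X S))
      _ = t * As.card := by rw [smul_eq_mul, Nat.mul_comm]
  -- double counting for Gs
  have hGsum : ∑ S ∈ Gs, mm (resp X S) ≤ (s + 1) * Bs.card + s * Gs.card := by
    set P : Finset ((_ : Finset (Fin t)) × Fin t) :=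
      Gs.sigma (fun S => covSet X (resp X S) \ S) with hP_def
    have hP1 : P.card = ∑ S ∈ Gs, (covSet X (resp X S) \ S).card :=
      Finset.card_sigma _ _
    have hmapsto : ∀ p ∈ P, insert p.2 p.1 ∈ Bs := by
      intro p hp
      obtain ⟨hpG, hpc⟩ := Finset.mem_sigma.mp hp
      obtain ⟨hcov, hnotmem⟩ := Finset.mem_sdiff.mp hpc
      obtain ⟨-, hcard, hH0⟩ := Finset.mem_filter.mp hpG
      have hre : resp X (insert p.2 p.1) = resp X p.1 := resp_insert_eq X hcov
      refine Finset.mem_filter.mpr ⟨Finset.mem_univ _, ?_, ?_⟩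
      · rw [Finset.card_insert_of_notMem hnotmem, hcard]
      · rw [hre]; exact hH0
    have hfiber : ∀ T ∈ Bs, (P.filter fun p => insert p.2 p.1 = T).card ≤ s + 1 := by
      intro T hT
      have hTcard : T.card = s + 1 := (Finset.mem_filter.mp hT).2.1
      have hle : (P.filter fun p => insert p.2 p.1 = T).card ≤ T.card := by
        apply Finset.card_le_card_of_injOn (fun p => p.2)
        · intro p hp
          obtain ⟨hpP, hins⟩ := Finset.mem_filter.mp hp
          rw [← hins]
          exact Finset.mem_insert_self _ _
        · intro p hp q hq hpq
          obtain ⟨hpP, hinsp⟩ := Finset.mem_filter.mp (Finset.mem_coe.mp hp)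
          obtain ⟨hqP, hinsq⟩ := Finset.mem_filter.mp (Finset.mem_coe.mp hq)
          have hp2 : p.2 ∉ p.1 := (Finset.mem_sdiff.mp (Finset.mem_sigma.mp hpP).2).2
          have hq2 : q.2 ∉ q.1 := (Finset.mem_sdiff.mp (Finset.mem_sigma.mp hqP).2).2
          have hp1 : p.1 = T.erase p.2 := by rw [← hinsp, Finset.erase_insert hp2]
          have hq1 : q.1 = T.erase q.2 := by rw [← hinsq, Finset.erase_insert hq2]
          rcases p with ⟨p1, p2⟩
          rcases q with ⟨q1, q2⟩
          simp only at hpq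
          subst hpq
          simp only at hp1 hq1
          have : p1 = q1 := hp1.trans hq1.symm
          subst this
          rfl
      exact hle.trans_eq hTcard
    have hP2 : P.card ≤ (s + 1) * Bs.card :=
      Finset.card_le_mul_card_image_of_maps_to hmapsto (s + 1) hfiber
    have hper : ∀ S ∈ Gs, mm (resp X S) ≤ (covSet X (resp X S) \ S).card + s := by
      intro S hS
      have hcard : S.card = s := (Finset.mem_filter.mp hS).2.1
      calc mm (resp X S) ≤ (covSet X (resp X S) \ S).card + S.card :=
            Finset.card_le_card_sdiff_add_card
        _ = (covSet X (resp X S) \ S).card + s := by rw [hcard]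
    calc ∑ S ∈ Gs, mm (resp X S) ≤ ∑ S ∈ Gs, ((covSet X (resp X S) \ S).card + s) :=
          Finset.sum_le_sum hper
      _ = (∑ S ∈ Gs, (covSet X (resp X S) \ S).card) + Gs.card * s := by
          rw [Finset.sum_add_distrib, Finset.sum_const, smul_eq_mul]
      _ = P.card + Gs.card * s := by rw [hP1]
      _ ≤ (s + 1) * Bs.card + s * Gs.card := by
          rw [Nat.mul_comm Gs.card s]
          exact Nat.add_le_add_right hP2 _
  -- total counting bound
  have hNsum : ∑ S ∈ allS, mm (resp X S) ≤ (s + 1) * Bs.card + s * Gs.card + t * As.card := by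
    rw [hsplitsum]
    exact Nat.add_le_add hGsum hAsum
  -- cast everything to ℝ and finish
  set E : ℝ := (2 : ℝ) ^ (-(N : ℝ) / (s : ℝ)) with hE_def
  set α : ℝ := (As.card : ℝ) with hα_def
  set β : ℝ := (Bs.card : ℝ) with hβ_def
  set γ : ℝ := (Gs.card : ℝ) with hγ_def
  set c : ℝ := (t.choose s : ℝ) with hc_def
  set c' : ℝ := (t.choose (s + 1) : ℝ) with hc'_def
  have hchain : c * (t : ℝ) * E ≤ ((s : ℝ) + 1) * β + (s : ℝ) * γ + (t : ℝ) * α := by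
    have hcast : (∑ S ∈ allS, (mm (resp X S) : ℝ)) ≤
        ((s : ℝ) + 1) * β + (s : ℝ) * γ + (t : ℝ) * α := by
      have := hNsum
      have h := (Nat.cast_le (α := ℝ)).mpr this
      push_cast at h
      convert h using 1 <;> push_cast <;> ring
    exact le_trans hL1 hcast
  have hγsum : γ + α = c := by
    rw [hγ_def, hα_def, hc_def]
    exact_mod_cast hGA_card
  have hchooseid : c' * ((s : ℝ) + 1) = c * ((t : ℝ) - (s : ℝ)) := by
    have h := Nat.choose_succ_right_eq t s
    have h2 : ((t.choose (s + 1) * (s + 1) : ℕ) : ℝ) = ((t.choose s * (t - s) : ℕ) : ℝ) := by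
      exact_mod_cast congrArg (Nat.cast (R := ℝ)) h
    push_cast [Nat.cast_sub hts] at h2
    rw [hc'_def, hc_def]
    push_cast
    linarith
  set M : ℝ := max (α / c) (β / c') with hM_def
  have hαM : α ≤ M * c := (div_le_iff₀ hc).mp (le_max_left _ _)
  have hβM : β ≤ M * c' := (div_le_iff₀ hc').mp (le_max_right _ _)
  have e1 : (s : ℝ) * γ + (t : ℝ) * α = (s : ℝ) * c + ((t : ℝ) - (s : ℝ)) * α := by
    linear_combination (s : ℝ) * hγsum
  have e2 : ((s : ℝ) + 1) * β ≤ M * (c * ((t : ℝ) - (s : ℝ))) := by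
    calc ((s : ℝ) + 1) * β ≤ ((s : ℝ) + 1) * (M * c') := by
          apply mul_le_mul_of_nonneg_left hβM (by positivity)
      _ = M * (c' * ((s : ℝ) + 1)) := by ring
      _ = M * (c * ((t : ℝ) - (s : ℝ))) := by rw [hchooseid]
  have e3 : ((t : ℝ) - (s : ℝ)) * α ≤ ((t : ℝ) - (s : ℝ)) * (M * c) :=
    mul_le_mul_of_nonneg_left hαM (le_of_lt hd)
  have e4 : c * ((t : ℝ) * E) ≤ c * (2 * (((t : ℝ) - (s : ℝ)) * M) + (s : ℝ)) := by
    linarith [hchain, e1, e2, e3]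
  have h2' : (t : ℝ) * E ≤ 2 * (((t : ℝ) - (s : ℝ)) * M) + (s : ℝ) :=
    le_of_mul_le_mul_left e4 hc
  -- final arithmetic
  rw [div_sub_div_same]
  have hx : (E * (t : ℝ) - (s : ℝ)) / ((t : ℝ) - (s : ℝ)) ≤ 2 * M := by
    rw [div_le_iff₀ hd]
    linarith [h2']
  linarith [hx]
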